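/- Greedy list scheduling (assigning each job, in arbitrary order, to the currently least loaded of P machines) yields a makespan at most (∑ᵢ sᵢ)/P + maxᵢ sᵢ, and hence at most 2·OPT. -/

import Mathlib

open Finset

/-- The load of machine `m` under assignment `A` of jobs with sizes `s`. -/
def machineLoad {n P : ℕ} (s : Fin n → ℝ) (A : Fin n → Fin P) (m : Fin P) : ℝ :=
  ∑ j, if A j = m then s j else 0

/-- The load of machine `m` from the jobs preceding job `j`. -/
def partialLoad {n P : ℕ} (s : Fin n → ℝ) (A : Fin n → Fin P) (j : Fin n) (m : Fin P) : ℝ :=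
  ∑ i ∈ Finset.univ.filter (fun i => i < j), if A i = m then s i else 0

/-! Let `j` be the last job placed on a machine `m`. When `j` was placed, its machine was the least
loaded one, so its load was at most the average `(∑_{i<j} sᵢ)/P`; hence the final load of `m` is
at most `(∑ sᵢ)/P + sⱼ`. Both terms are lower bounds for the makespan of every schedule: the total
work is shared by `P` machines, and each job lies on some machine. -/

noncomputable def makespan {n P : ℕ} (s : Fin n → ℝ) (A : Fin n → Fin P) : ℝ :=
  ⨆ m, machineLoad s A m

section

variable {n P : ℕ} {s : Fin n → ℝ} {A : Fin n → Fin P}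

theorem machineLoad_nonneg (hs : ∀ i, 0 ≤ s i) (m : Fin P) : 0 ≤ machineLoad s A m :=
  sum_nonneg fun i _ => by split_ifs <;> simp [hs i]

theorem single_le_machineLoad (hs : ∀ i, 0 ≤ s i) (i : Fin n) : s i ≤ machineLoad s A (A i) := by
  simpa [machineLoad] using single_le_sum (f := fun j => if A j = A i then s j else 0)
    (fun j _ => by split_ifs <;> simp [hs j]) (mem_univ i)

variable (s A) in
theorem sum_machineLoad : ∑ m, machineLoad s A m = ∑ i, s i := by
  simp only [machineLoad]
  rw [sum_comm]
  simp

variable (s A) in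
theorem sum_partialLoad (j : Fin n) : ∑ m, partialLoad s A j m = ∑ i with i < j, s i := by
  simp only [partialLoad]
  rw [sum_comm]
  simp

theorem machineLoad_eq_add_partialLoad {j : Fin n} {m : Fin P} (hj : A j = m)
    (hlast : ∀ i, A i = m → i ≤ j) : machineLoad s A m = s j + partialLoad s A j m := by
  have hsupp : ∀ i ∉ Iic j, (if A i = m then s i else 0) = 0 := fun i hi =>
    if_neg fun hi' => hi (mem_Iic.mpr (hlast i hi'))
  rw [machineLoad, ← sum_subset (subset_univ _) fun i _ hi => hsupp i hi, Iic_eq_cons_Iio,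
    sum_cons, partialLoad, filter_gt_eq_Iio, if_pos hj]

theorem partialLoad_le_sum_div (hs : ∀ i, 0 ≤ s i) {j : Fin n}
    (hleast : ∀ m, partialLoad s A j (A j) ≤ partialLoad s A j m) :
    partialLoad s A j (A j) ≤ (∑ i, s i) / P := by
  have hP : (0 : ℝ) < P := by exact_mod_cast (A j).pos
  rw [le_div_iff₀ hP]
  calc partialLoad s A j (A j) * P = ∑ _m : Fin P, partialLoad s A j (A j) := by simp [mul_comm]
    _ ≤ ∑ m, partialLoad s A j m := sum_le_sum fun m _ => hleast m
    _ = ∑ i with i < j, s i := sum_partialLoad s A j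
    _ ≤ ∑ i, s i := sum_le_sum_of_subset_of_nonneg (filter_subset _ _) fun i _ _ => hs i

theorem machineLoad_le_of_greedy (hs : ∀ i, 0 ≤ s i)
    (hgreedy : ∀ j m, partialLoad s A j (A j) ≤ partialLoad s A j m) (m : Fin P) :
    machineLoad s A m ≤ (∑ i, s i) / P + ⨆ i, s i := by
  by_cases hm : ∃ i, A i = m
  · obtain ⟨i, hi⟩ := hm
    obtain ⟨j, hj, hlast⟩ := exists_max_image {i | A i = m} id ⟨i, by simpa using hi⟩
    simp only [mem_filter, mem_univ, true_and, id] at hj hlast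
    have hsj : s j ≤ ⨆ i, s i := le_ciSup (Set.finite_range s).bddAbove j
    rw [machineLoad_eq_add_partialLoad hj hlast, ← hj]
    linarith [partialLoad_le_sum_div hs (hgreedy j)]
  · push Not at hm
    have hzero : machineLoad s A m = 0 := sum_eq_zero fun i _ => if_neg (hm i)
    rw [hzero]
    exact add_nonneg (div_nonneg (sum_nonneg fun i _ => hs i) P.cast_nonneg) (Real.iSup_nonneg hs)

theorem makespan_nonneg (hs : ∀ i, 0 ≤ s i) : 0 ≤ makespan s A :=
  Real.iSup_nonneg (machineLoad_nonneg hs)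

variable (s A) in
theorem machineLoad_le_makespan (m : Fin P) : machineLoad s A m ≤ makespan s A :=
  le_ciSup (Set.finite_range _).bddAbove m

theorem sum_div_le_makespan (hs : ∀ i, 0 ≤ s i) : (∑ i, s i) / P ≤ makespan s A := by
  refine div_le_of_le_mul₀ P.cast_nonneg (makespan_nonneg hs) ?_
  calc ∑ i, s i = ∑ m, machineLoad s A m := (sum_machineLoad s A).symm
    _ ≤ ∑ _m : Fin P, makespan s A := sum_le_sum fun m _ => machineLoad_le_makespan s A m
    _ = makespan s A * P := by simp [mul_comm]

theorem iSup_le_makespan (hs : ∀ i, 0 ≤ s i) : ⨆ i, s i ≤ makespan s A :=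
  Real.iSup_le (fun i => (single_le_machineLoad hs i).trans (machineLoad_le_makespan s A _))
    (makespan_nonneg hs)

theorem makespan_le_of_greedy (hs : ∀ i, 0 ≤ s i)
    (hgreedy : ∀ j m, partialLoad s A j (A j) ≤ partialLoad s A j m) :
    makespan s A ≤ (∑ i, s i) / P + ⨆ i, s i :=
  Real.iSup_le (machineLoad_le_of_greedy hs hgreedy)
    (add_nonneg (div_nonneg (sum_nonneg fun i _ => hs i) P.cast_nonneg) (Real.iSup_nonneg hs))

end

theorem greedy_list_scheduling_bound_general {n P : ℕ}
    (s : Fin n → ℝ) (hs : ∀ i, 0 ≤ s i) (A : Fin n → Fin P)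
    (hgreedy : ∀ j : Fin n, ∀ m : Fin P, partialLoad s A j (A j) ≤ partialLoad s A j m) :
    (⨆ m : Fin P, machineLoad s A m) ≤ (∑ i, s i) / P + (⨆ i : Fin n, s i) ∧
    (⨆ m : Fin P, machineLoad s A m) ≤
      2 * ⨅ B : Fin n → Fin P, ⨆ m : Fin P, machineLoad s B m := by
  have hbound : makespan s A ≤ (∑ i, s i) / P + ⨆ i, s i := makespan_le_of_greedy hs hgreedy
  have : Nonempty (Fin n → Fin P) := ⟨A⟩
  refine ⟨hbound, hbound.trans ?_⟩
  rw [two_mul]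
  exact add_le_add (le_ciInf fun B => sum_div_le_makespan hs) (le_ciInf fun B => iSup_le_makespan hs)

/-- Greedy list scheduling (each job, in arbitrary order, goes to the currently
least loaded machine) has makespan at most `(∑ᵢ sᵢ)/P + maxᵢ sᵢ`, and hence at
most `2 · OPT`. -/
theorem greedy_list_scheduling_bound {n P : ℕ} [NeZero n] [NeZero P]
    (s : Fin n → ℝ) (hs : ∀ i, 0 ≤ s i) (A : Fin n → Fin P)
    (hgreedy : ∀ j : Fin n, ∀ m : Fin P, partialLoad s A j (A j) ≤ partialLoad s A j m) :
    (⨆ m : Fin P, machineLoad s A m) ≤ (∑ i, s i) / P + (⨆ i : Fin n, s i) ∧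
    (⨆ m : Fin P, machineLoad s A m) ≤
      2 * ⨅ B : Fin n → Fin P, ⨆ m : Fin P, machineLoad s B m :=
  greedy_list_scheduling_bound_general s hs A hgreedy
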